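/- arXiv:1110.5357 — 4 statements merged into one kernel-verified Lean document; each statement's English description precedes it below -/
import Mathlib

section
/- Let e₁, e₂ : Ω → ℝⁿ be differentiable maps which are pointwise orthonormal, and let φ = e₁ ∧ e₂ viewed as a map into Λ²(ℝⁿ) with its standard inner product. Then |∂φ/∂x|² = |∂e₁/∂x|² + |∂e₂/∂x|² − 2(e₁ · ∂e₂/∂x)² for any partial derivative ∂/∂x, and consequently |∇φ|² = |∇e₁|² + |∇e₂|² − 2|⟨de₁, e₂⟩|². -/
open scoped RealInnerProductSpace

/-- The inner product on Λ²(ℝⁿ) of two simple wedges: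
`⟪v₁∧v₂, w₁∧w₂⟫ = (v₁·w₁)(v₂·w₂) − (v₁·w₂)(v₂·w₁)`. -/
noncomputable def wedgeInner {n : ℕ} (v₁ v₂ w₁ w₂ : EuclideanSpace ℝ (Fin n)) : ℝ :=
  ⟪v₁, w₁⟫ * ⟪v₂, w₂⟫ - ⟪v₁, w₂⟫ * ⟪v₂, w₁⟫

/-- The squared norm in Λ²(ℝⁿ) of `a∧b + c∧d`, expanded by bilinearity. -/
noncomputable def wedgeSumNormSq {n : ℕ} (a b c d : EuclideanSpace ℝ (Fin n)) : ℝ :=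
  wedgeInner a b a b + 2 * wedgeInner a b c d + wedgeInner c d c d

/-! Differentiating the orthonormality relations gives `⟪∂e₁, e₁⟫ = 0` and
`⟪∂e₁, e₂⟫ = -⟪e₁, ∂e₂⟫`. Substituted into the bilinear expansion of `|∂e₁ ∧ e₂ + e₁ ∧ ∂e₂|²`,
these kill the cross term and make each diagonal term `|∂eᵢ|² - (e₁ · ∂e₂)²`. -/

open scoped Topology

theorem inner_fderiv_add_inner_fderiv_eq_zero {E F : Type*} [NormedAddCommGroup E]
    [NormedSpace ℝ E] [NormedAddCommGroup F] [InnerProductSpace ℝ F] {f g : E → F} {x : E}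
    (hf : DifferentiableAt ℝ f x) (hg : DifferentiableAt ℝ g x) {c : ℝ}
    (hc : (fun y => ⟪f y, g y⟫) =ᶠ[𝓝 x] fun _ => c) (v : E) :
    ⟪f x, fderiv ℝ g x v⟫ + ⟪fderiv ℝ f x v, g x⟫ = 0 := by
  rw [← fderiv_inner_apply ℝ hf hg, hc.fderiv_eq, fderiv_const_apply, zero_apply]

theorem wedgeSumNormSq_eq_of_orthonormal {n : ℕ} {a b u w : EuclideanSpace ℝ (Fin n)}
    (hu : ⟪u, u⟫ = 1) (hw : ⟪w, w⟫ = 1) (huw : ⟪u, w⟫ = 0) (hau : ⟪a, u⟫ = 0)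
    (hab : ⟪u, b⟫ + ⟪a, w⟫ = 0) :
    wedgeSumNormSq a w u b = ‖a‖ ^ 2 + ‖b‖ ^ 2 - 2 * ⟪u, b⟫ ^ 2 := by
  have haw : ⟪a, w⟫ = -⟪u, b⟫ := by linarith
  unfold wedgeSumNormSq wedgeInner
  rw [real_inner_comm a w, real_inner_comm u w, real_inner_comm u b, hu, hw, huw, hau, haw,
    real_inner_self_eq_norm_sq, real_inner_self_eq_norm_sq]
  ring

/-- For a pointwise orthonormal pair `(e₁, e₂)` and `φ = e₁ ∧ e₂`, one has
`|∂φ/∂x|² = |∂e₁/∂x|² + |∂e₂/∂x|² − 2 (e₁ · ∂e₂/∂x)²` for every directional derivative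
(`∂φ/∂x = ∂e₁/∂x ∧ e₂ + e₁ ∧ ∂e₂/∂x`), and consequently
`|∇φ|² = |∇e₁|² + |∇e₂|² − 2|⟨de₁,e₂⟩|²`. -/
theorem stmt_2 {n : ℕ} (Ω : Set (ℝ × ℝ)) (hΩ : IsOpen Ω)
    (e₁ e₂ : ℝ × ℝ → EuclideanSpace ℝ (Fin n))
    (he₁ : ∀ x ∈ Ω, DifferentiableAt ℝ e₁ x)
    (he₂ : ∀ x ∈ Ω, DifferentiableAt ℝ e₂ x)
    (horth : ∀ x ∈ Ω, ⟪e₁ x, e₁ x⟫ = 1 ∧ ⟪e₂ x, e₂ x⟫ = 1 ∧ ⟪e₁ x, e₂ x⟫ = 0) :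
    (∀ x ∈ Ω, ∀ v : ℝ × ℝ,
      wedgeSumNormSq (fderiv ℝ e₁ x v) (e₂ x) (e₁ x) (fderiv ℝ e₂ x v)
        = ‖fderiv ℝ e₁ x v‖ ^ 2 + ‖fderiv ℝ e₂ x v‖ ^ 2
            - 2 * ⟪e₁ x, fderiv ℝ e₂ x v⟫ ^ 2) ∧
    (∀ x ∈ Ω,
      wedgeSumNormSq (fderiv ℝ e₁ x (1, 0)) (e₂ x) (e₁ x) (fderiv ℝ e₂ x (1, 0))
          + wedgeSumNormSq (fderiv ℝ e₁ x (0, 1)) (e₂ x) (e₁ x) (fderiv ℝ e₂ x (0, 1))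
        = (‖fderiv ℝ e₁ x (1, 0)‖ ^ 2 + ‖fderiv ℝ e₁ x (0, 1)‖ ^ 2)
            + (‖fderiv ℝ e₂ x (1, 0)‖ ^ 2 + ‖fderiv ℝ e₂ x (0, 1)‖ ^ 2)
            - 2 * (⟪fderiv ℝ e₁ x (1, 0), e₂ x⟫ ^ 2 + ⟪fderiv ℝ e₁ x (0, 1), e₂ x⟫ ^ 2)) := by
  have hderiv : ∀ x ∈ Ω, ∀ v : ℝ × ℝ, ⟪fderiv ℝ e₁ x v, e₁ x⟫ = 0 ∧
      ⟪e₁ x, fderiv ℝ e₂ x v⟫ + ⟪fderiv ℝ e₁ x v, e₂ x⟫ = 0 := by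
    intro x hx v
    have h₁₁ := inner_fderiv_add_inner_fderiv_eq_zero (he₁ x hx) (he₁ x hx)
      (Filter.eventually_of_mem (hΩ.mem_nhds hx) fun y hy => (horth y hy).1) v
    rw [real_inner_comm] at h₁₁
    exact ⟨by linarith, inner_fderiv_add_inner_fderiv_eq_zero (he₁ x hx) (he₂ x hx)
      (Filter.eventually_of_mem (hΩ.mem_nhds hx) fun y hy => (horth y hy).2.2) v⟩
  have hpartial : ∀ x ∈ Ω, ∀ v : ℝ × ℝ,
      wedgeSumNormSq (fderiv ℝ e₁ x v) (e₂ x) (e₁ x) (fderiv ℝ e₂ x v)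
        = ‖fderiv ℝ e₁ x v‖ ^ 2 + ‖fderiv ℝ e₂ x v‖ ^ 2
            - 2 * ⟪e₁ x, fderiv ℝ e₂ x v⟫ ^ 2 := fun x hx v =>
    wedgeSumNormSq_eq_of_orthonormal (horth x hx).1 (horth x hx).2.1 (horth x hx).2.2
      (hderiv x hx v).1 (hderiv x hx v).2
  refine ⟨hpartial, fun x hx => ?_⟩
  have hsq : ∀ v : ℝ × ℝ, ⟪fderiv ℝ e₁ x v, e₂ x⟫ ^ 2 = ⟪e₁ x, fderiv ℝ e₂ x v⟫ ^ 2 := fun v => by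
    rw [show ⟪fderiv ℝ e₁ x v, e₂ x⟫ = -⟪e₁ x, fderiv ℝ e₂ x v⟫ by linarith [(hderiv x hx v).2],
      neg_sq]
  rw [hpartial x hx, hpartial x hx, hsq, hsq]
  ring
end

section
/- Let 0 < b < a and let v : closure(B_a \ B_b) → ℝ be continuous, harmonic in the annulus B_a \ B_b = {x ∈ ℝ² : b < |x| < a}, with v ≡ c_a on the circle |x| = a and v ≡ c_b on the circle |x| = b, where c_a, c_b are constants. Then v(x) = ((c_a − c_b)/log(a/b))·log|x| + (c_b·log a − c_a·log b)/log(a/b) for all x in the annulus. -/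
/-!
Let `p x = A log ‖x‖ + B` with `A, B` chosen so that `p = c_a` on `‖x‖ = a` and `p = c_b` on
`‖x‖ = b`. In dimension `n` one has `Δ log ‖x‖ = (n - 2) / ‖x‖²`, so `p` is harmonic in the
punctured plane, and `v - p` is harmonic in the annulus and vanishes on its boundary. The weak
maximum principle then gives `v = p`. That principle comes from the second-derivative test: at an
interior maximum every second directional derivative, hence `Δ f`, is `≤ 0`, so a function with
`Δ f > 0` takes its maximum on the boundary. A harmonic `f` is perturbed to `f + δ ‖x‖²`, whose
Laplacian is `2 n δ > 0`, and `δ → 0`.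
-/

open Filter Topology Set InnerProductSpace Laplacian Module

-- Nothing is assumed of `deriv g`: where it is not differentiable, `deriv (deriv g) t₀ = 0`.
theorem IsLocalMax.deriv_deriv_nonpos {g : ℝ → ℝ} {t₀ : ℝ} (hmax : IsLocalMax g t₀)
    (hg : ∀ᶠ t in 𝓝 t₀, DifferentiableAt ℝ g t) : deriv (deriv g) t₀ ≤ 0 := by
  by_contra! hpos
  have hright : ∀ᶠ t in 𝓝[>] t₀, 0 < deriv g t ∧ DifferentiableAt ℝ g t ∧ g t ≤ g t₀ :=
    (deriv_pos_right_of_sign_deriv (nhdsWithin_le_nhds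
      (eventually_nhdsWithin_sign_eq_of_deriv_pos hpos hmax.deriv_eq_zero))).and
      (nhdsWithin_le_nhds (hg.and hmax))
  obtain ⟨u, hu, hsub⟩ := mem_nhdsGT_iff_exists_Ioo_subset.1 hright
  obtain ⟨t, ht⟩ := nonempty_Ioo.2 (mem_Ioi.1 hu)
  have hcont : ContinuousOn g (Icc t₀ t) := by
    intro s hs
    rcases hs.1.eq_or_lt with rfl | hs₀
    · exact hg.self_of_nhds.continuousAt.continuousWithinAt
    · exact (hsub ⟨hs₀, hs.2.trans_lt ht.2⟩).2.1.continuousAt.continuousWithinAt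
  obtain ⟨c, hc, hslope⟩ := exists_deriv_eq_slope g ht.1 hcont
    fun s hs => (hsub ⟨hs.1, hs.2.trans ht.2⟩).2.1.differentiableWithinAt
  have hc' := (hsub ⟨hc.1, hc.2.trans ht.2⟩).1
  rw [hslope, div_pos_iff_of_pos_right (sub_pos.2 ht.1), sub_pos] at hc'
  exact (hsub ht).2.2.not_gt hc'

section NormedSpace

variable {E : Type*} [NormedAddCommGroup E] [NormedSpace ℝ E]

theorem ContDiffAt.iteratedFDeriv_two_apply_same {f : E → ℝ} {x : E} (hf : ContDiffAt ℝ 2 f x)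
    (e : E) : iteratedFDeriv ℝ 2 f x ![e, e] = fderiv ℝ (fun y => fderiv ℝ f y e) x e := by
  have hd : DifferentiableAt ℝ (fderiv ℝ f) x :=
    (hf.fderiv_right (m := 1) le_rfl).differentiableAt one_ne_zero
  rw [iteratedFDeriv_two_apply, fderiv_clm_apply hd (differentiableAt_const e)]
  simp

theorem IsLocalMax.iteratedFDeriv_two_nonpos {f : E → ℝ} {x₀ : E} (hmax : IsLocalMax f x₀)
    (hf : ContDiffAt ℝ 2 f x₀) (e : E) : iteratedFDeriv ℝ 2 f x₀ ![e, e] ≤ 0 := by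
  set ℓ : ℝ → E := fun t => x₀ + t • e
  have hℓ : ∀ t, HasDerivAt ℓ e t := fun t => by
    simpa [ℓ] using ((hasDerivAt_id t).smul_const e).const_add x₀
  have hℓ₀ : ℓ 0 = x₀ := by simp [ℓ]
  have htend : Tendsto ℓ (𝓝 0) (𝓝 x₀) := hℓ₀ ▸ (hℓ 0).continuousAt.tendsto
  have hderiv : ∀ᶠ t in 𝓝 0, HasDerivAt (f ∘ ℓ) (fderiv ℝ f (ℓ t) e) t :=
    (htend.eventually (hf.eventually (by simp))).mono fun t ht =>
      (ht.differentiableAt (by norm_num)).hasFDerivAt.comp_hasDerivAt t (hℓ t)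
  have hdd : HasDerivAt (fun t => fderiv ℝ f (ℓ t) e)
      (fderiv ℝ (fun y => fderiv ℝ f y e) x₀ e) 0 := by
    have hd : DifferentiableAt ℝ (fun y => fderiv ℝ f y e) x₀ :=
      ((hf.fderiv_right (m := 1) le_rfl).differentiableAt one_ne_zero).clm_apply
        (differentiableAt_const e)
    exact hd.hasFDerivAt.comp_hasDerivAt_of_eq 0 (hℓ 0) hℓ₀.symm
  calc iteratedFDeriv ℝ 2 f x₀ ![e, e] = deriv (deriv (f ∘ ℓ)) 0 := by
        rw [hf.iteratedFDeriv_two_apply_same,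
          (hdd.congr_of_eventuallyEq (hderiv.mono fun t ht => ht.deriv)).deriv]
    _ ≤ 0 := ((by rwa [hℓ₀] : IsLocalMax f (ℓ 0)).comp_continuous
        (hℓ 0).continuousAt).deriv_deriv_nonpos (hderiv.mono fun t ht => ht.differentiableAt)

end NormedSpace

section InnerProductSpace

variable {E : Type*} [NormedAddCommGroup E] [InnerProductSpace ℝ E]

theorem iteratedFDeriv_two_norm_sq_apply_same (x e : E) :
    iteratedFDeriv ℝ 2 (fun y : E => ‖y‖ ^ 2) x ![e, e] = 2 * ‖e‖ ^ 2 := by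
  have hderiv : (fun y => fderiv ℝ (fun y : E => ‖y‖ ^ 2) y e) = fun y => 2 * inner ℝ e y := by
    ext y
    simp [fderiv_norm_sq_apply, real_inner_comm]
  have hinner : HasFDerivAt (fun y : E => inner ℝ e y) (innerSL ℝ e) x := (innerSL ℝ e).hasFDerivAt
  rw [(contDiff_norm_sq ℝ).contDiffAt.iteratedFDeriv_two_apply_same, hderiv,
    (hinner.const_mul 2).fderiv]
  simp

theorem fderiv_log_norm_apply {x : E} (hx : x ≠ 0) (e : E) :
    fderiv ℝ (fun y => Real.log ‖y‖) x e = inner ℝ e x / ‖x‖ ^ 2 := by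
  have hlog : (fun y : E => Real.log ‖y‖) = fun y => 2⁻¹ * Real.log (‖y‖ ^ 2) := by
    ext y
    rw [Real.log_pow]
    ring
  have hx' : ‖x‖ ^ 2 ≠ 0 := by positivity
  rw [hlog, (((hasStrictFDerivAt_norm_sq x).hasFDerivAt.log hx').const_mul _).fderiv]
  simp only [smul_apply, coe_innerSL_apply, nsmul_eq_mul, Nat.cast_ofNat,
    smul_eq_mul, real_inner_comm]
  field_simp

theorem iteratedFDeriv_two_log_norm_apply_same {x : E} (hx : x ≠ 0) (e : E) :
    iteratedFDeriv ℝ 2 (fun y => Real.log ‖y‖) x ![e, e]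
      = ‖e‖ ^ 2 / ‖x‖ ^ 2 - 2 * inner ℝ e x ^ 2 / ‖x‖ ^ 4 := by
  have hsmooth : ContDiffAt ℝ 2 (fun y : E => Real.log ‖y‖) x :=
    (contDiffAt_norm ℝ hx).log (norm_ne_zero_iff.2 hx)
  have hderiv : (fun y => fderiv ℝ (fun y : E => Real.log ‖y‖) y e)
      =ᶠ[𝓝 x] fun y => inner ℝ e y * (‖y‖ ^ 2)⁻¹ :=
    (eventually_ne_nhds hx).mono fun y hy => by
      simp only [fderiv_log_norm_apply hy, div_eq_mul_inv]
  have hx' : ‖x‖ ^ 2 ≠ 0 := by positivity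
  have hinv : HasFDerivAt (fun y : E => (‖y‖ ^ 2)⁻¹) _ x :=
    (hasDerivAt_inv hx').comp_hasFDerivAt x (hasStrictFDerivAt_norm_sq x).hasFDerivAt
  have hinner : HasFDerivAt (fun y : E => inner ℝ e y) (innerSL ℝ e) x := (innerSL ℝ e).hasFDerivAt
  rw [hsmooth.iteratedFDeriv_two_apply_same, hderiv.fderiv_eq, (hinner.fun_mul hinv).fderiv]
  simp only [real_inner_comm, neg_smul, smul_neg, add_apply,
    neg_apply, smul_apply, coe_innerSL_apply, nsmul_eq_mul,
    Nat.cast_ofNat, smul_eq_mul, inner_self_eq_norm_sq_to_K, Real.ringHom_apply]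
  field_simp
  ring

variable [FiniteDimensional ℝ E]

theorem IsLocalMax.laplacian_nonpos {f : E → ℝ} {x₀ : E} (hmax : IsLocalMax f x₀)
    (hf : ContDiffAt ℝ 2 f x₀) : Δ f x₀ ≤ 0 := by
  rw [laplacian_eq_iteratedFDeriv_stdOrthonormalBasis]
  exact Finset.sum_nonpos fun i _ => hmax.iteratedFDeriv_two_nonpos hf _

theorem laplacian_norm_sq (x : E) : Δ (fun y : E => ‖y‖ ^ 2) x = 2 * finrank ℝ E := by
  simp [laplacian_eq_iteratedFDeriv_stdOrthonormalBasis, iteratedFDeriv_two_norm_sq_apply_same,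
    mul_comm]

theorem laplacian_log_norm {x : E} (hx : x ≠ 0) :
    Δ (fun y : E => Real.log ‖y‖) x = (finrank ℝ E - 2) / ‖x‖ ^ 2 := by
  simp only [laplacian_eq_iteratedFDeriv_stdOrthonormalBasis,
    iteratedFDeriv_two_log_norm_apply_same hx, Finset.sum_sub_distrib, ← Finset.sum_div,
    ← Finset.mul_sum, (stdOrthonormalBasis ℝ E).sum_sq_inner_right, OrthonormalBasis.norm_eq_one,
    one_pow, Finset.sum_const, Finset.card_univ, Fintype.card_fin, nsmul_eq_mul, mul_one]
  field_simp

theorem le_of_forall_mem_diff_le_of_laplacian_pos {f : E → ℝ} {K U : Set E} (hK : IsCompact K)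
    (hUK : U ⊆ interior K) (hfK : ContinuousOn f K) (hfU : ∀ x ∈ U, ContDiffAt ℝ 2 f x)
    (hΔ : ∀ x ∈ U, 0 < Δ f x) {M : ℝ} (hM : ∀ x ∈ K \ U, f x ≤ M) {x : E} (hx : x ∈ K) :
    f x ≤ M := by
  obtain ⟨x₀, hx₀K, hx₀⟩ := hK.exists_isMaxOn ⟨x, hx⟩ hfK
  by_cases hx₀U : x₀ ∈ U
  · have hloc : IsLocalMax f x₀ := hx₀.isLocalMax (mem_interior_iff_mem_nhds.1 (hUK hx₀U))
    exact absurd (hloc.laplacian_nonpos (hfU x₀ hx₀U)) (hΔ x₀ hx₀U).not_ge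
  · exact (hx₀ hx).trans (hM x₀ ⟨hx₀K, hx₀U⟩)

theorem HarmonicOnNhd.le_of_forall_mem_diff_le [Nontrivial E] {f : E → ℝ} {K U : Set E}
    (hf : HarmonicOnNhd f U) (hK : IsCompact K) (hUK : U ⊆ interior K) (hfK : ContinuousOn f K)
    {M : ℝ} (hM : ∀ x ∈ K \ U, f x ≤ M) {x : E} (hx : x ∈ K) : f x ≤ M := by
  obtain ⟨R, hR⟩ := (Metric.isBounded_iff_subset_closedBall 0).1 hK.isBounded
  have hq : ∀ y : E, ContDiffAt ℝ 2 (fun y : E => ‖y‖ ^ 2) y :=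
    fun _ => (contDiff_norm_sq ℝ).contDiffAt
  refine le_of_forall_pos_le_add fun ε hε => ?_
  set δ := ε / (R ^ 2 + 1)
  have hδ : 0 < δ := by positivity
  have hδq : ∀ y : E, ContDiffAt ℝ 2 (δ • fun y : E => ‖y‖ ^ 2) y := fun y => (hq y).const_smul δ
  have hδR : δ * R ^ 2 ≤ ε := by
    rw [div_mul_eq_mul_div, div_le_iff₀ (by positivity)]
    nlinarith
  have hperturbed : f x + δ * ‖x‖ ^ 2 ≤ M + ε := by
    refine le_of_forall_mem_diff_le_of_laplacian_pos (f := f + δ • fun y => ‖y‖ ^ 2) hK hUK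
      (hfK.add ((continuous_norm.pow 2).const_smul δ).continuousOn)
      (fun y hy => (hf y hy).1.add (hδq y)) (fun y hy => ?_) (fun y hy => ?_) hx
    · rw [(hf y hy).1.laplacian_add (hδq y), laplacian_smul _ (hq y),
        (hf y hy).2.self_of_nhds, laplacian_norm_sq]
      have : (0 : ℝ) < finrank ℝ E := by exact_mod_cast finrank_pos
      simp only [Pi.zero_apply, smul_eq_mul, zero_add]
      positivity
    · have hyR : ‖y‖ ≤ R := mem_closedBall_zero_iff.1 (hR hy.1)
      have : δ * ‖y‖ ^ 2 ≤ δ * R ^ 2 := by gcongr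
      simp only [Pi.add_apply, Pi.smul_apply, smul_eq_mul]
      linarith [hM y hy]
  linarith [mul_nonneg hδ.le (sq_nonneg ‖x‖)]

theorem HarmonicOnNhd.eq_zero_of_forall_mem_diff_eq_zero [Nontrivial E] {f : E → ℝ}
    {K U : Set E} (hf : HarmonicOnNhd f U) (hK : IsCompact K) (hUK : U ⊆ interior K)
    (hfK : ContinuousOn f K) (h0 : ∀ x ∈ K \ U, f x = 0) {x : E} (hx : x ∈ K) : f x = 0 :=
  le_antisymm (HarmonicOnNhd.le_of_forall_mem_diff_le hf hK hUK hfK (fun y hy => (h0 y hy).le) hx)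
    (neg_nonpos.1 (HarmonicOnNhd.le_of_forall_mem_diff_le hf.neg hK hUK hfK.neg
      (fun y hy => (neg_eq_zero.2 (h0 y hy)).le) hx))

end InnerProductSpace

section Annulus

variable {E : Type*} [NormedAddCommGroup E] {a b : ℝ}

theorem isOpen_annulus : IsOpen {x : E | b < ‖x‖ ∧ ‖x‖ < a} :=
  (isOpen_lt continuous_const continuous_norm).inter (isOpen_lt continuous_norm continuous_const)

theorem annulus_subset_interior_closedBall_diff_ball :
    {x : E | b < ‖x‖ ∧ ‖x‖ < a} ⊆ interior (Metric.closedBall 0 a \ Metric.ball 0 b) :=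
  interior_maximal (fun x hx => by simp [hx.1.le, hx.2.le]) isOpen_annulus

theorem ne_zero_of_mem_closedBall_diff_ball (hb : 0 < b) {x : E}
    (hx : x ∈ Metric.closedBall 0 a \ Metric.ball 0 b) : x ≠ 0 :=
  norm_pos_iff.1 (hb.trans_le (by simpa using hx.2))

theorem norm_eq_or_norm_eq_of_mem_closedBall_diff_ball_diff_annulus {x : E}
    (hx : x ∈ (Metric.closedBall 0 a \ Metric.ball 0 b) \ {x : E | b < ‖x‖ ∧ ‖x‖ < a}) :
    ‖x‖ = a ∨ ‖x‖ = b := by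
  obtain ⟨⟨hxa, hxb⟩, hx⟩ := hx
  simp only [Metric.mem_closedBall, dist_zero_right, Metric.mem_ball, not_lt] at hxa hxb
  rcases hxb.eq_or_lt with hxb | hxb
  · exact Or.inr hxb.symm
  · exact Or.inl (hxa.eq_or_lt.resolve_right fun h => hx ⟨hxb, h⟩)

end Annulus

noncomputable def logInterpolation (a b ca cb r : ℝ) : ℝ :=
  (ca - cb) / Real.log (a / b) * Real.log r
    + (cb * Real.log a - ca * Real.log b) / Real.log (a / b)

theorem logInterpolation_left {a b : ℝ} (ha : 0 < a) (hb : 0 < b) (hab : a ≠ b) (ca cb : ℝ) :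
    logInterpolation a b ca cb a = ca := by
  have hL : Real.log a - Real.log b ≠ 0 :=
    sub_ne_zero.2 ((Real.log_injOn_pos.ne_iff ha hb).2 hab)
  rw [logInterpolation, Real.log_div ha.ne' hb.ne']
  field_simp
  ring

theorem logInterpolation_right {a b : ℝ} (ha : 0 < a) (hb : 0 < b) (hab : a ≠ b) (ca cb : ℝ) :
    logInterpolation a b ca cb b = cb := by
  have hL : Real.log a - Real.log b ≠ 0 :=
    sub_ne_zero.2 ((Real.log_injOn_pos.ne_iff ha hb).2 hab)
  rw [logInterpolation, Real.log_div ha.ne' hb.ne']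
  field_simp
  ring

section Plane

variable {E : Type*} [NormedAddCommGroup E] [InnerProductSpace ℝ E] [FiniteDimensional ℝ E]

theorem harmonicAt_log_norm_of_finrank_eq_two (hE : finrank ℝ E = 2) {x : E} (hx : x ≠ 0) :
    HarmonicAt (fun y : E => Real.log ‖y‖) x :=
  ⟨(contDiffAt_norm ℝ hx).log (norm_ne_zero_iff.2 hx),
    (eventually_ne_nhds hx).mono fun y hy => by simp [laplacian_log_norm hy, hE]⟩

theorem harmonicAt_logInterpolation_norm (hE : finrank ℝ E = 2) (a b ca cb : ℝ) {x : E}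
    (hx : x ≠ 0) : HarmonicAt (fun y : E => logInterpolation a b ca cb ‖y‖) x :=
  (harmonicAt_log_norm_of_finrank_eq_two hE hx).const_smul.add (harmonicAt_const _)

theorem EuclideanSpace.laplacian_fin_two {f : EuclideanSpace ℝ (Fin 2) → ℝ}
    {x : EuclideanSpace ℝ (Fin 2)} (hf : ContDiffAt ℝ 2 f x) :
    Δ f x = fderiv ℝ (fun y => fderiv ℝ f y (EuclideanSpace.single 0 1)) x
        (EuclideanSpace.single 0 1)
      + fderiv ℝ (fun y => fderiv ℝ f y (EuclideanSpace.single 1 1)) x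
        (EuclideanSpace.single 1 1) := by
  simp [laplacian_eq_iteratedFDeriv_orthonormalBasis f (EuclideanSpace.basisFun (Fin 2) ℝ),
    Fin.sum_univ_two, hf.iteratedFDeriv_two_apply_same]

theorem EuclideanSpace.harmonicOnNhd_fin_two {f : EuclideanSpace ℝ (Fin 2) → ℝ}
    {U : Set (EuclideanSpace ℝ (Fin 2))} (hU : IsOpen U) (hf : ContDiffOn ℝ 2 f U)
    (hΔ : ∀ x ∈ U, fderiv ℝ (fun y => fderiv ℝ f y (EuclideanSpace.single 0 1)) x
        (EuclideanSpace.single 0 1)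
      + fderiv ℝ (fun y => fderiv ℝ f y (EuclideanSpace.single 1 1)) x
        (EuclideanSpace.single 1 1) = 0) :
    HarmonicOnNhd f U := fun x hx =>
  ⟨hf.contDiffAt (hU.mem_nhds hx), eventually_of_mem (hU.mem_nhds hx) fun y hy => by
    rw [EuclideanSpace.laplacian_fin_two (hf.contDiffAt (hU.mem_nhds hy))]
    exact hΔ y hy⟩

end Plane

/-- A function continuous on the closed annulus `b ≤ |x| ≤ a`, harmonic in the open annulus,
with constant boundary values `c_a` on `|x| = a` and `c_b` on `|x| = b`, is the explicit
logarithmic interpolation. -/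
theorem stmt_5 (a b ca cb : ℝ) (hb : 0 < b) (hba : b < a)
    (v : EuclideanSpace ℝ (Fin 2) → ℝ)
    (hvc : ContinuousOn v (Metric.closedBall 0 a \ Metric.ball 0 b))
    (hvreg : ContDiffOn ℝ 2 v {x | b < ‖x‖ ∧ ‖x‖ < a})
    (hharm : ∀ x, b < ‖x‖ → ‖x‖ < a →
      fderiv ℝ (fun y => fderiv ℝ v y (EuclideanSpace.single 0 1)) x (EuclideanSpace.single 0 1)
        + fderiv ℝ (fun y => fderiv ℝ v y (EuclideanSpace.single 1 1)) x
            (EuclideanSpace.single 1 1) = 0)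
    (hbda : ∀ x : EuclideanSpace ℝ (Fin 2), ‖x‖ = a → v x = ca)
    (hbdb : ∀ x : EuclideanSpace ℝ (Fin 2), ‖x‖ = b → v x = cb) :
    ∀ x : EuclideanSpace ℝ (Fin 2), b < ‖x‖ → ‖x‖ < a →
      v x = (ca - cb) / Real.log (a / b) * Real.log ‖x‖
        + (cb * Real.log a - ca * Real.log b) / Real.log (a / b) := by
  intro x hxb hxa
  set K := Metric.closedBall (0 : EuclideanSpace ℝ (Fin 2)) a \ Metric.ball 0 b
  set U := {x : EuclideanSpace ℝ (Fin 2) | b < ‖x‖ ∧ ‖x‖ < a}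
  set p := fun y : EuclideanSpace ℝ (Fin 2) => logInterpolation a b ca cb ‖y‖
  have hUK : U ⊆ interior K := annulus_subset_interior_closedBall_diff_ball
  have hp : ∀ y ∈ K, HarmonicAt p y := fun y hy =>
    harmonicAt_logInterpolation_norm finrank_euclideanSpace_fin a b ca cb
      (ne_zero_of_mem_closedBall_diff_ball hb hy)
  have hv : HarmonicOnNhd v U :=
    EuclideanSpace.harmonicOnNhd_fin_two isOpen_annulus hvreg fun y hy => hharm y hy.1 hy.2
  have hboundary : ∀ y ∈ K \ U, (v - p) y = 0 := fun y hy => by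
    have ha : 0 < a := hb.trans hba
    rcases norm_eq_or_norm_eq_of_mem_closedBall_diff_ball_diff_annulus hy with hy | hy
    · simp [p, hy, hbda y hy, logInterpolation_left ha hb hba.ne']
    · simp [p, hy, hbdb y hy, logInterpolation_right ha hb hba.ne']
  exact sub_eq_zero.1 (HarmonicOnNhd.eq_zero_of_forall_mem_diff_eq_zero
    (hv.sub fun y hy => hp y (interior_subset (hUK hy)))
    ((isCompact_closedBall 0 a).diff Metric.isOpen_ball) hUK
    (hvc.sub fun y hy => (hp y hy).1.continuousAt.continuousWithinAt) hboundary
    (by simp [hxa.le, hxb.le]))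
end

section
/- Let f : B_a \ B_b → ℝⁿ be a smooth conformal minimal immersion with conformal factor e^u and canonical frame e₁ = e^{−u}f_r, e₂ = (re^u)^{−1}f_θ. Then the 'angular energy equals half the total energy' identity ∫ |∂_θ e₂|²r^{−2} + |∂_θ e₁|²r^{−2} dx = ½ ∫ |∇e₁|² + |∇e₂|² dx holds if and only if ∫ (1/r + u_r)² dx = ∫ r^{−2} u_θ² dx, where all integrals are over the annulus B_a \ B_b. -/
open scoped RealInnerProductSpace Real

set_option maxHeartbeats 2000000 in
/-- For a conformal minimal immersion of an annulus (in polar coordinates, with area element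
`r dr dθ`), the angular energy of the canonical frame equals half the total energy iff
`∫ (1/r + u_r)² dx = ∫ r^{−2} u_θ² dx`. -/
theorem stmt_10 {n : ℕ} (a b : ℝ) (hb : 0 < b) (hba : b < a)
    (f : ℝ × ℝ → EuclideanSpace ℝ (Fin n)) (u : ℝ × ℝ → ℝ)
    (hf : ContDiff ℝ (⊤ : ℕ∞) f) (hu : ContDiff ℝ (⊤ : ℕ∞) u)
    (A : Set (ℝ × ℝ)) (hA : A = Set.Ioo b a ×ˢ Set.Ioo 0 (2 * π))
    (hconf₁ : ∀ p ∈ A, ⟪fderiv ℝ f p (1, 0), fderiv ℝ f p (1, 0)⟫ = Real.exp (2 * u p))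
    (hconf₂ : ∀ p ∈ A, ⟪fderiv ℝ f p (0, 1), fderiv ℝ f p (0, 1)⟫
        = p.1 ^ 2 * Real.exp (2 * u p))
    (hconf₃ : ∀ p ∈ A, ⟪fderiv ℝ f p (1, 0), fderiv ℝ f p (0, 1)⟫ = 0)
    (Arr Aθθ : ℝ × ℝ → EuclideanSpace ℝ (Fin n))
    (hArr : ∀ p, Arr p =
      fderiv ℝ (fun q => fderiv ℝ f q (1, 0)) p (1, 0)
        - (Real.exp (-(2 * u p))
            * ⟪fderiv ℝ (fun q => fderiv ℝ f q (1, 0)) p (1, 0), fderiv ℝ f p (1, 0)⟫)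
              • fderiv ℝ f p (1, 0)
        - (p.1 ^ (-2 : ℤ) * Real.exp (-(2 * u p))
            * ⟪fderiv ℝ (fun q => fderiv ℝ f q (1, 0)) p (1, 0), fderiv ℝ f p (0, 1)⟫)
              • fderiv ℝ f p (0, 1))
    (hAθθ : ∀ p, Aθθ p =
      fderiv ℝ (fun q => fderiv ℝ f q (0, 1)) p (0, 1)
        - (Real.exp (-(2 * u p))
            * ⟪fderiv ℝ (fun q => fderiv ℝ f q (0, 1)) p (0, 1), fderiv ℝ f p (1, 0)⟫)
              • fderiv ℝ f p (1, 0)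
        - (p.1 ^ (-2 : ℤ) * Real.exp (-(2 * u p))
            * ⟪fderiv ℝ (fun q => fderiv ℝ f q (0, 1)) p (0, 1), fderiv ℝ f p (0, 1)⟫)
              • fderiv ℝ f p (0, 1))
    (hmin : ∀ p ∈ A, Arr p = -(p.1 ^ (-2 : ℤ)) • Aθθ p)
    (e₁ e₂ : ℝ × ℝ → EuclideanSpace ℝ (Fin n))
    (he₁ : ∀ p, e₁ p = Real.exp (-u p) • fderiv ℝ f p (1, 0))
    (he₂ : ∀ p, e₂ p = (p.1⁻¹ * Real.exp (-u p)) • fderiv ℝ f p (0, 1)) :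
    (∫ p in A, (‖fderiv ℝ e₁ p (0, 1)‖ ^ 2 + ‖fderiv ℝ e₂ p (0, 1)‖ ^ 2) * p.1⁻¹)
        = (1 / 2) * ∫ p in A,
            (‖fderiv ℝ e₁ p (1, 0)‖ ^ 2 + ‖fderiv ℝ e₂ p (1, 0)‖ ^ 2
              + p.1 ^ (-2 : ℤ) * (‖fderiv ℝ e₁ p (0, 1)‖ ^ 2 + ‖fderiv ℝ e₂ p (0, 1)‖ ^ 2))
              * p.1
      ↔ (∫ p in A, (p.1⁻¹ + fderiv ℝ u p (1, 0)) ^ 2 * p.1)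
          = ∫ p in A, (fderiv ℝ u p (0, 1)) ^ 2 * p.1⁻¹ := by
  -- basic setup
  have hA_open : IsOpen A := hA ▸ (isOpen_Ioo.prod isOpen_Ioo)
  have hFd : ∀ w : ℝ × ℝ, Differentiable ℝ (fun q => fderiv ℝ f q w) := fun w =>
    ((hf.fderiv_right (m := (⊤ : ℕ∞)) (by simp)).clm_apply contDiff_const).differentiable (by simp)
  have hud : Differentiable ℝ u := hu.differentiable (by simp)
  have hDconf : ∀ (g h : ℝ × ℝ → ℝ), (∀ q ∈ A, g q = h q) → ∀ p ∈ A,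
      ∀ v, fderiv ℝ g p v = fderiv ℝ h p v := by
    intro g h hgh p hp v
    rw [Filter.EventuallyEq.fderiv_eq (Filter.eventuallyEq_of_mem (hA_open.mem_nhds hp) hgh)]
  have hexp2 : ∀ p, HasFDerivAt (fun q => Real.exp (2 * u q))
      ((Real.exp (2 * u p) * 2) • fderiv ℝ u p) p := by
    intro p
    have := (Real.hasDerivAt_exp (2 * u p)).comp_hasFDerivAt p
      ((hud p).hasFDerivAt.const_mul 2)
    rwa [smul_smul] at this
  have hexpneg : ∀ p, HasFDerivAt (fun q => Real.exp (-u q))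
      (-Real.exp (-u p) • fderiv ℝ u p) p := by
    intro p
    have := (Real.hasDerivAt_exp (-u p)).comp_hasFDerivAt p (hud p).hasFDerivAt.neg
    rwa [smul_neg, ← neg_smul] at this
  -- second-derivative symmetry
  have hsymm : ∀ p, fderiv ℝ (fun q => fderiv ℝ f q (1,0)) p (0,1)
      = fderiv ℝ (fun q => fderiv ℝ f q (0,1)) p (1,0) := by
    intro p
    have h1 : ∀ (w v : ℝ × ℝ), fderiv ℝ (fun q => fderiv ℝ f q w) p v
        = fderiv ℝ (fderiv ℝ f) p v w := by
      intro w v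
      rw [fderiv_clm_apply ((hf.fderiv_right (m := (⊤ : ℕ∞)) (by simp)).differentiable (by simp) p)
        (differentiableAt_const _)]
      simp
    rw [h1, h1]
    exact (hf.contDiffAt.isSymmSndFDerivAt (by rw [minSmoothness_of_isRCLikeNormedField]; exact WithTop.coe_le_coe.mpr le_top)) _ _
  -- derivatives of the conformality relations
  have hk : ∀ p ∈ A, ∀ v : ℝ × ℝ,
      (⟪fderiv ℝ (fun q => fderiv ℝ f q (1,0)) p v, fderiv ℝ f p (1,0)⟫
        = Real.exp (2 * u p) * fderiv ℝ u p v)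
      ∧ (⟪fderiv ℝ (fun q => fderiv ℝ f q (0,1)) p v, fderiv ℝ f p (0,1)⟫
        = p.1 * v.1 * Real.exp (2 * u p) + p.1 ^ 2 * Real.exp (2 * u p) * fderiv ℝ u p v)
      ∧ (⟪fderiv ℝ (fun q => fderiv ℝ f q (1,0)) p v, fderiv ℝ f p (0,1)⟫
        = - ⟪fderiv ℝ (fun q => fderiv ℝ f q (0,1)) p v, fderiv ℝ f p (1,0)⟫) := by
    intro p hp v
    refine ⟨?_, ?_, ?_⟩
    · have h := hDconf _ _ hconf₁ p hp v
      rw [fderiv_inner_apply (𝕜 := ℝ) (hFd (1,0) p) (hFd (1,0) p), (hexp2 p).fderiv] at h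
      simp only [ContinuousLinearMap.smul_apply, smul_eq_mul] at h
      rw [real_inner_comm] at h
      linarith
    · have h := hDconf (fun q => ⟪fderiv ℝ f q (0,1), fderiv ℝ f q (0,1)⟫)
        (fun q : ℝ × ℝ => q.1 * q.1 * Real.exp (2 * u q))
        (fun q hq => by
          show ⟪fderiv ℝ f q (0,1), fderiv ℝ f q (0,1)⟫ = q.1 * q.1 * Real.exp (2 * u q)
          rw [hconf₂ q hq]; ring) p hp v
      rw [fderiv_inner_apply (𝕜 := ℝ) (hFd (0,1) p) (hFd (0,1) p)] at h
      have h2 : HasFDerivAt (fun q : ℝ × ℝ => q.1 * q.1 * Real.exp (2 * u q))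
          ((p.1 * p.1) • ((Real.exp (2 * u p) * 2) • fderiv ℝ u p)
            + Real.exp (2 * u p) • (p.1 • ContinuousLinearMap.fst ℝ ℝ ℝ
                + p.1 • ContinuousLinearMap.fst ℝ ℝ ℝ)) p :=
        (hasFDerivAt_fst.mul hasFDerivAt_fst).mul (hexp2 p)
      rw [h2.fderiv] at h
      simp only [ContinuousLinearMap.add_apply, ContinuousLinearMap.smul_apply,
        ContinuousLinearMap.coe_fst', smul_eq_mul] at h
      have hc := real_inner_comm (fderiv ℝ f p (0,1))
        ((fderiv ℝ (fun q => fderiv ℝ f q (0,1)) p) v)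
      ring_nf at h hc ⊢
      nlinarith [h, hc]
    · have h := hDconf _ _ hconf₃ p hp v
      rw [fderiv_inner_apply (𝕜 := ℝ) (hFd (1,0) p) (hFd (0,1) p)] at h
      simp only [fderiv_fun_const, Pi.zero_apply, ContinuousLinearMap.zero_apply] at h
      have hc := real_inner_comm (fderiv ℝ f p (1,0))
        ((fderiv ℝ (fun q => fderiv ℝ f q (0,1)) p) v)
      linarith
  -- rewrite e₁ e₂ as explicit functions
  have he₁' : e₁ = fun q => Real.exp (-u q) • fderiv ℝ f q (1,0) := funext he₁
  have he₂' : e₂ = fun q => (q.1⁻¹ * Real.exp (-u q)) • fderiv ℝ f q (0,1) := funext he₂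
  -- derivative formulas
  have dE1 : ∀ p (v : ℝ × ℝ), fderiv ℝ e₁ p v
      = (-(Real.exp (-u p) * fderiv ℝ u p v)) • fderiv ℝ f p (1,0)
        + Real.exp (-u p) • fderiv ℝ (fun q => fderiv ℝ f q (1,0)) p v := by
    intro p v
    rw [he₁', fderiv_fun_smul ((hexpneg p).differentiableAt) (hFd (1,0) p)]
    rw [ContinuousLinearMap.add_apply, ContinuousLinearMap.smul_apply,
      ContinuousLinearMap.smulRight_apply, (hexpneg p).fderiv]
    simp only [ContinuousLinearMap.neg_apply, ContinuousLinearMap.smul_apply, smul_eq_mul,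
      neg_smul, neg_mul]
    abel
  have dE2 : ∀ p : ℝ × ℝ, p.1 ≠ 0 → ∀ v : ℝ × ℝ, fderiv ℝ e₂ p v
      = (-((p.1^2)⁻¹ * v.1) * Real.exp (-u p)
          + p.1⁻¹ * (-(Real.exp (-u p) * fderiv ℝ u p v))) • fderiv ℝ f p (0,1)
        + (p.1⁻¹ * Real.exp (-u p)) • fderiv ℝ (fun q => fderiv ℝ f q (0,1)) p v := by
    intro p hp v
    have hinv : HasFDerivAt (fun q : ℝ × ℝ => q.1⁻¹)
        ((-(p.1 ^ 2)⁻¹ : ℝ) • ContinuousLinearMap.fst ℝ ℝ ℝ) p :=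
      (hasDerivAt_inv hp).comp_hasFDerivAt p hasFDerivAt_fst
    have hc : HasFDerivAt (fun q : ℝ × ℝ => q.1⁻¹ * Real.exp (-u q))
        (p.1⁻¹ • (-Real.exp (-u p) • fderiv ℝ u p)
          + Real.exp (-u p) • ((-(p.1 ^ 2)⁻¹ : ℝ) • ContinuousLinearMap.fst ℝ ℝ ℝ)) p :=
      hinv.mul (hexpneg p)
    rw [he₂', fderiv_fun_smul hc.differentiableAt (hFd (0,1) p)]
    rw [ContinuousLinearMap.add_apply, ContinuousLinearMap.smul_apply,
      ContinuousLinearMap.smulRight_apply, hc.fderiv]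
    simp only [ContinuousLinearMap.add_apply, ContinuousLinearMap.smul_apply,
      ContinuousLinearMap.neg_apply, ContinuousLinearMap.coe_fst', smul_eq_mul]
    rw [add_comm]
    congr 1
    congr 1
    ring
  -- expansion lemmas
  have expand2 : ∀ (s t : ℝ) (x y : EuclideanSpace ℝ (Fin n)),
      ‖s • x + t • y‖^2 = s^2*⟪x,x⟫ + 2*(s*t)*⟪x,y⟫ + t^2*⟪y,y⟫ := by
    intro s t x y
    rw [← real_inner_self_eq_norm_sq]
    simp only [inner_add_left, inner_add_right, real_inner_smul_left, real_inner_smul_right]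
    rw [real_inner_comm y x]
    ring
  have expand3 : ∀ (s t : ℝ) (w x y : EuclideanSpace ℝ (Fin n)),
      ⟪w - s•x - t•y, w - s•x - t•y⟫
        = ⟪w,w⟫ - 2*s*⟪w,x⟫ - 2*t*⟪w,y⟫ + s^2*⟪x,x⟫ + 2*(s*t)*⟪x,y⟫ + t^2*⟪y,y⟫ := by
    intro s t w x y
    simp only [inner_sub_left, inner_sub_right, real_inner_smul_left, real_inner_smul_right]
    rw [real_inner_comm x w, real_inner_comm y w, real_inner_comm y x]
    ring
  -- the key pointwise identity on A
  have key : ∀ p ∈ A,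
      (‖fderiv ℝ e₁ p (0, 1)‖ ^ 2 + ‖fderiv ℝ e₂ p (0, 1)‖ ^ 2) * p.1⁻¹
        = (1/2) * ((‖fderiv ℝ e₁ p (1, 0)‖ ^ 2 + ‖fderiv ℝ e₂ p (1, 0)‖ ^ 2
              + p.1 ^ (-2 : ℤ) * (‖fderiv ℝ e₁ p (0, 1)‖ ^ 2 + ‖fderiv ℝ e₂ p (0, 1)‖ ^ 2))
              * p.1)
          + ((p.1⁻¹ + fderiv ℝ u p (1, 0)) ^ 2 * p.1 - (fderiv ℝ u p (0, 1)) ^ 2 * p.1⁻¹) := by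
    intro p hp
    have hp' : p ∈ Set.Ioo b a ×ˢ Set.Ioo 0 (2*π) := hA ▸ hp
    have hr : 0 < p.1 := lt_trans hb hp'.1.1
    have hr0 : p.1 ≠ 0 := hr.ne'
    set r : ℝ := p.1 with hrdef
    set ee : ℝ := Real.exp (-u p) with heedef
    set ur : ℝ := fderiv ℝ u p (1,0) with hurdef
    set uθ : ℝ := fderiv ℝ u p (0,1) with huθdef
    set fr : EuclideanSpace ℝ (Fin n) := fderiv ℝ f p (1,0) with hfrdef
    set fθ : EuclideanSpace ℝ (Fin n) := fderiv ℝ f p (0,1) with hfθdef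
    set frr : EuclideanSpace ℝ (Fin n) := fderiv ℝ (fun q => fderiv ℝ f q (1,0)) p (1,0)
      with hfrrdef
    set frθ : EuclideanSpace ℝ (Fin n) := fderiv ℝ (fun q => fderiv ℝ f q (1,0)) p (0,1)
      with hfrθdef
    set fθθ : EuclideanSpace ℝ (Fin n) := fderiv ℝ (fun q => fderiv ℝ f q (0,1)) p (0,1)
      with hfθθdef
    have hee0 : ee ≠ 0 := Real.exp_ne_zero _
    have hEee : Real.exp (2 * u p) = (ee^2)⁻¹ := by
      rw [heedef, ← Real.exp_nat_mul]
      rw [← Real.exp_neg]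
      norm_num
    have hEneg : Real.exp (-(2 * u p)) = ee^2 := by
      rw [heedef, ← Real.exp_nat_mul]
      norm_num
    have i1 : ⟪fr, fr⟫ = (ee^2)⁻¹ := by rw [hfrdef, hconf₁ p hp, hEee]
    have i2 : ⟪fθ, fθ⟫ = r^2 * (ee^2)⁻¹ := by rw [hfθdef, hconf₂ p hp, hEee]
    have i3 : ⟪fr, fθ⟫ = 0 := hconf₃ p hp
    have hsym : fderiv ℝ (fun q => fderiv ℝ f q (0,1)) p (1,0) = frθ := (hsymm p).symm
    have i4 : ⟪frr, fr⟫ = (ee^2)⁻¹ * ur := by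
      have := (hk p hp (1,0)).1; rw [hEee] at this; exact this
    have i5 : ⟪frθ, fr⟫ = (ee^2)⁻¹ * uθ := by
      have := (hk p hp (0,1)).1; rw [hEee] at this; exact this
    have i6 : ⟪frθ, fθ⟫ = r * (ee^2)⁻¹ + r^2 * (ee^2)⁻¹ * ur := by
      have := (hk p hp (1,0)).2.1; rw [hEee, hsym] at this
      simpa using this
    have i7 : ⟪fθθ, fθ⟫ = r^2 * (ee^2)⁻¹ * uθ := by
      have := (hk p hp (0,1)).2.1; rw [hEee] at this
      simpa using this
    have i8 : ⟪frr, fθ⟫ = -((ee^2)⁻¹ * uθ) := by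
      have := (hk p hp (1,0)).2.2; rw [hsym, i5] at this
      -- this : ⟪frr, fθ⟫ = -⟪frθ, fr⟫  -- need to match
      exact this
    have i9 : ⟪fθθ, fr⟫ = -(r * (ee^2)⁻¹ + r^2 * (ee^2)⁻¹ * ur) := by
      have := (hk p hp (0,1)).2.2; rw [i6] at this
      linarith [this]
    -- clean norm formulas
    have i4' : ⟪fr, frr⟫ = (ee^2)⁻¹ * ur := by rw [real_inner_comm]; exact i4
    have i5' : ⟪fr, frθ⟫ = (ee^2)⁻¹ * uθ := by rw [real_inner_comm]; exact i5
    have i6' : ⟪fθ, frθ⟫ = r * (ee^2)⁻¹ + r^2 * (ee^2)⁻¹ * ur := by rw [real_inner_comm]; exact i6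
    have i7' : ⟪fθ, fθθ⟫ = r^2 * (ee^2)⁻¹ * uθ := by rw [real_inner_comm]; exact i7
    have hee2 : (ee:ℝ)^2 ≠ 0 := pow_ne_zero _ hee0
    have hr2 : (r:ℝ)^2 ≠ 0 := pow_ne_zero _ hr0
    have cN1r : ‖fderiv ℝ e₁ p (1,0)‖^2 = ee^2*⟪frr,frr⟫ - ur^2 := by
      rw [dE1 p (1,0), ← heedef, ← hurdef, ← hfrdef, ← hfrrdef, expand2, i1, i4']
      field_simp
      ring
    have cN1θ : ‖fderiv ℝ e₁ p (0,1)‖^2 = ee^2*⟪frθ,frθ⟫ - uθ^2 := by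
      rw [dE1 p (0,1), ← heedef, ← huθdef, ← hfrdef, ← hfrθdef, expand2, i1, i5']
      field_simp
      ring
    have cN2r : ‖fderiv ℝ e₂ p (1,0)‖^2 = r⁻¹^2*ee^2*⟪frθ,frθ⟫ - (r⁻¹ + ur)^2 := by
      rw [dE2 p hr0 (1,0), ← hsymm p]
      rw [← hrdef, ← hfθdef, ← heedef, ← hurdef, ← hfrθdef]
      dsimp only
      rw [expand2, i2, i6']
      field_simp
      ring
    have cN2θ : ‖fderiv ℝ e₂ p (0,1)‖^2 = r⁻¹^2*ee^2*⟪fθθ,fθθ⟫ - uθ^2 := by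
      rw [dE2 p hr0 (0,1)]
      rw [← hrdef, ← hfθdef, ← heedef, ← huθdef, ← hfθθdef]
      dsimp only
      rw [expand2, i2, i7']
      field_simp
      ring
    -- minimality in scalar form
    have hzr : (r : ℝ) ^ (-2 : ℤ) = (r^2)⁻¹ := by
      rw [zpow_neg, zpow_two, ← sq]
    have hm0 : ⟪Arr p, Arr p⟫ = ((r^2)⁻¹)^2 * ⟪Aθθ p, Aθθ p⟫ := by
      rw [hmin p hp, real_inner_smul_left, real_inner_smul_right, ← hrdef, hzr]
      ring
    rw [hArr p, hAθθ p] at hm0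
    rw [← hrdef, ← hfrdef, ← hfθdef, ← hfrrdef, ← hfθθdef, hEneg, hzr] at hm0
    rw [expand3, expand3] at hm0
    rw [i1, i2, i3, i4, i7, i8, i9] at hm0
    -- final algebra
    rw [cN1r, cN1θ, cN2r, cN2θ, hzr]
    field_simp at hm0 ⊢
    linear_combination (-(1:ℝ)) * hm0
  -- integrability and conclusion
  have hMA : MeasurableSet A := hA ▸ (measurableSet_Ioo.prod measurableSet_Ioo)
  have hS_open : IsOpen {p : ℝ × ℝ | p.1 ≠ 0} :=
    isOpen_compl_singleton.preimage continuous_fst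
  have he₁c : ContDiff ℝ (⊤ : ℕ∞) e₁ := by
    rw [he₁']
    exact (Real.contDiff_exp.comp hu.neg).smul ((hf.fderiv_right (by simp)).clm_apply contDiff_const)
  have he₂c : ContDiffOn ℝ (⊤ : ℕ∞) e₂ {p : ℝ × ℝ | p.1 ≠ 0} := by
    rw [he₂']
    exact ((contDiff_fst.contDiffOn.inv (fun p hp => hp)).mul
        (Real.contDiff_exp.comp hu.neg).contDiffOn).smul
      ((hf.fderiv_right (by simp)).clm_apply contDiff_const).contDiffOn
  have hc1 : ∀ w : ℝ × ℝ, Continuous (fun p => ‖fderiv ℝ e₁ p w‖^2) := fun w =>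
    (((ContinuousLinearMap.apply ℝ (EuclideanSpace ℝ (Fin n)) w).continuous.comp
      ((he₁c.fderiv_right (m := (⊤ : ℕ∞)) (by simp)).continuous)).norm.pow 2)
  have hc2 : ∀ w : ℝ × ℝ, ContinuousOn (fun p => ‖fderiv ℝ e₂ p w‖^2) {p : ℝ × ℝ | p.1 ≠ 0} :=
    fun w => (((ContinuousLinearMap.apply ℝ (EuclideanSpace ℝ (Fin n)) w).continuous.comp_continuousOn
      (he₂c.continuousOn_fderiv_of_isOpen hS_open (by simp))).norm.pow 2)
  have hcu : ∀ w : ℝ × ℝ, Continuous (fun p => fderiv ℝ u p w) := fun w =>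
    (ContinuousLinearMap.apply ℝ ℝ w).continuous.comp ((hu.fderiv_right (m := (⊤ : ℕ∞)) (by simp)).continuous)
  have hinvS : ContinuousOn (fun p : ℝ × ℝ => p.1⁻¹) {p : ℝ × ℝ | p.1 ≠ 0} :=
    continuous_fst.continuousOn.inv₀ fun p hp => hp
  have hzS : ContinuousOn (fun p : ℝ × ℝ => p.1 ^ (-2 : ℤ)) {p : ℝ × ℝ | p.1 ≠ 0} :=
    continuous_fst.continuousOn.zpow₀ (-2) fun p hp => Or.inl hp
  -- integrable on A
  have hK : IsCompact (Set.Icc ((b, 0) : ℝ × ℝ) (a, 2 * π)) := isCompact_Icc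
  have hKS : Set.Icc ((b, 0) : ℝ × ℝ) (a, 2 * π) ⊆ {p : ℝ × ℝ | p.1 ≠ 0} := fun p hp =>
    (lt_of_lt_of_le hb hp.1.1).ne'
  have hAK : A ⊆ Set.Icc ((b, 0) : ℝ × ℝ) (a, 2 * π) := by
    rw [hA]
    rintro p ⟨h1, h2⟩
    exact ⟨⟨h1.1.le, h2.1.le⟩, ⟨h1.2.le, h2.2.le⟩⟩
  have hIntOn : ∀ g : ℝ × ℝ → ℝ, ContinuousOn g {p : ℝ × ℝ | p.1 ≠ 0} →
      MeasureTheory.IntegrableOn g A := fun g hg =>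
    ((hg.mono hKS).integrableOn_compact hK).mono_set hAK
  have I1 : MeasureTheory.IntegrableOn
      (fun p => (‖fderiv ℝ e₁ p (0, 1)‖ ^ 2 + ‖fderiv ℝ e₂ p (0, 1)‖ ^ 2) * p.1⁻¹) A :=
    hIntOn _ (((hc1 (0,1)).continuousOn.add (hc2 (0,1))).mul hinvS)
  have I2 : MeasureTheory.IntegrableOn
      (fun p => (‖fderiv ℝ e₁ p (1, 0)‖ ^ 2 + ‖fderiv ℝ e₂ p (1, 0)‖ ^ 2
        + p.1 ^ (-2 : ℤ) * (‖fderiv ℝ e₁ p (0, 1)‖ ^ 2 + ‖fderiv ℝ e₂ p (0, 1)‖ ^ 2)) * p.1) A :=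
    hIntOn _ ((((hc1 (1,0)).continuousOn.add (hc2 (1,0))).add
      (hzS.mul ((hc1 (0,1)).continuousOn.add (hc2 (0,1))))).mul continuous_fst.continuousOn)
  have I3 : MeasureTheory.IntegrableOn
      (fun p : ℝ × ℝ => (p.1⁻¹ + fderiv ℝ u p (1, 0)) ^ 2 * p.1) A :=
    hIntOn _ (((hinvS.add (hcu (1,0)).continuousOn).pow 2).mul continuous_fst.continuousOn)
  have I4 : MeasureTheory.IntegrableOn
      (fun p : ℝ × ℝ => (fderiv ℝ u p (0, 1)) ^ 2 * p.1⁻¹) A :=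
    hIntOn _ ((((hcu (0,1)).continuousOn).pow 2).mul hinvS)
  have heq : (∫ p in A, (‖fderiv ℝ e₁ p (0, 1)‖ ^ 2 + ‖fderiv ℝ e₂ p (0, 1)‖ ^ 2) * p.1⁻¹)
      = ∫ p in A, ((1/2) * ((‖fderiv ℝ e₁ p (1, 0)‖ ^ 2 + ‖fderiv ℝ e₂ p (1, 0)‖ ^ 2
          + p.1 ^ (-2 : ℤ) * (‖fderiv ℝ e₁ p (0, 1)‖ ^ 2 + ‖fderiv ℝ e₂ p (0, 1)‖ ^ 2)) * p.1)
        + ((p.1⁻¹ + fderiv ℝ u p (1, 0)) ^ 2 * p.1 - (fderiv ℝ u p (0, 1)) ^ 2 * p.1⁻¹)) :=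
    MeasureTheory.setIntegral_congr_fun hMA (fun p hp => key p hp)
  have I34 : MeasureTheory.IntegrableOn (fun p : ℝ × ℝ =>
      (p.1⁻¹ + fderiv ℝ u p (1, 0)) ^ 2 * p.1 - (fderiv ℝ u p (0, 1)) ^ 2 * p.1⁻¹) A := I3.sub I4
  have I2' : MeasureTheory.IntegrableOn (fun p : ℝ × ℝ =>
      (1/2 : ℝ) * ((‖fderiv ℝ e₁ p (1, 0)‖ ^ 2 + ‖fderiv ℝ e₂ p (1, 0)‖ ^ 2
        + p.1 ^ (-2 : ℤ) * (‖fderiv ℝ e₁ p (0, 1)‖ ^ 2 + ‖fderiv ℝ e₂ p (0, 1)‖ ^ 2)) * p.1)) A :=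
    I2.const_mul _
  rw [MeasureTheory.integral_add I2' I34,
    MeasureTheory.integral_sub I3 I4, MeasureTheory.integral_const_mul] at heq
  constructor
  · intro h
    rw [h] at heq
    linarith
  · intro h
    rw [heq, h]
    ring
end

section
/- Let f : Ω → ℝⁿ be a smooth conformal immersion of an open set Ω ⊆ ℝ² with |∂f/∂x¹|² = |∂f/∂x²|² = e^{2v}, ∂f/∂x¹ · ∂f/∂x² = 0, and let X_f = (e^{−v}∂₁f) ∧ (e^{−v}∂₂f) be the Gauss map into Λ²(ℝⁿ). Then |∇X_f|² = e^{−2v} Σ_{i,j} |A_{ij}|², where A_{ij} is the normal (second-fundamental-form) part of ∂ᵢ∂ⱼf. -/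
open scoped RealInnerProductSpace

lemma key_alg {n : ℕ} (u w q0 q1 : EuclideanSpace ℝ (Fin n)) (s pv : ℝ) (hs : s ≠ 0)
    (huu : ⟪u,u⟫ = (s*s)⁻¹) (hww : ⟪w,w⟫ = (s*s)⁻¹) (huw : ⟪u,w⟫ = 0)
    (hq0u : ⟪q0,u⟫ = pv * (s*s)⁻¹) (hq1w : ⟪q1,w⟫ = pv * (s*s)⁻¹) :
    wedgeSumNormSq ((s * (-pv)) • u + s • q0) (s • w) (s • u) ((s * (-pv)) • w + s • q1)
      = (s*s) * (‖q0 - ((s*s) * ⟪q0,u⟫) • u - ((s*s) * ⟪q0,w⟫) • w‖^2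
               + ‖q1 - ((s*s) * ⟪q1,u⟫) • u - ((s*s) * ⟪q1,w⟫) • w‖^2) := by
  have hwu : ⟪w,u⟫ = (0:ℝ) := by rw [real_inner_comm]; exact huw
  have huq0 : ⟪u,q0⟫ = pv * (s*s)⁻¹ := by rw [real_inner_comm]; exact hq0u
  have hwq1 : ⟪w,q1⟫ = pv * (s*s)⁻¹ := by rw [real_inner_comm]; exact hq1w
  have hwq0 : ⟪w,q0⟫ = ⟪q0,w⟫ := real_inner_comm _ _
  have huq1 : ⟪u,q1⟫ = ⟪q1,u⟫ := real_inner_comm _ _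
  have hq1q0 : ⟪q1,q0⟫ = ⟪q0,q1⟫ := real_inner_comm _ _
  rw [← real_inner_self_eq_norm_sq, ← real_inner_self_eq_norm_sq]
  simp only [wedgeSumNormSq, wedgeInner, inner_add_left, inner_add_right,
    inner_sub_left, inner_sub_right, real_inner_smul_left, real_inner_smul_right,
    huu, hww, huw, hwu, hq0u, hq1w, huq0, hwq1, hwq0, huq1, hq1q0]
  field_simp
  ring

/-- For a smooth conformal immersion `f` with conformal factor `e^v` and Gauss map
`X_f = (e^{−v}∂₁f) ∧ (e^{−v}∂₂f)`, one has `|∇X_f|² = e^{−2v} Σ_{i,j} |A_{ij}|²`, where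
`A_{ij}` is the normal part of `∂ᵢ∂ⱼf` and
`∂ᵢX_f = ∂ᵢ(e^{−v}∂₁f) ∧ (e^{−v}∂₂f) + (e^{−v}∂₁f) ∧ ∂ᵢ(e^{−v}∂₂f)`. -/
theorem stmt_18 {n : ℕ} (Ω : Set (ℝ × ℝ)) (hΩ : IsOpen Ω)
    (f : ℝ × ℝ → EuclideanSpace ℝ (Fin n)) (v : ℝ × ℝ → ℝ)
    (hf : ContDiff ℝ (⊤ : ℕ∞) f) (hv : ContDiff ℝ (⊤ : ℕ∞) v)
    (d : Fin 2 → ℝ × ℝ) (hd0 : d 0 = (1, 0)) (hd1 : d 1 = (0, 1))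
    (hconf : ∀ x ∈ Ω, ∀ i j : Fin 2,
      ⟪fderiv ℝ f x (d i), fderiv ℝ f x (d j)⟫ = if i = j then Real.exp (2 * v x) else 0)
    (A : Fin 2 → Fin 2 → ℝ × ℝ → EuclideanSpace ℝ (Fin n))
    (hA : ∀ i j x, A i j x =
      fderiv ℝ (fun y => fderiv ℝ f y (d j)) x (d i)
        - (Real.exp (-(2 * v x))
            * ⟪fderiv ℝ (fun y => fderiv ℝ f y (d j)) x (d i), fderiv ℝ f x (d 0)⟫)
              • fderiv ℝ f x (d 0)
        - (Real.exp (-(2 * v x))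
            * ⟪fderiv ℝ (fun y => fderiv ℝ f y (d j)) x (d i), fderiv ℝ f x (d 1)⟫)
              • fderiv ℝ f x (d 1))
    (te₁ te₂ : ℝ × ℝ → EuclideanSpace ℝ (Fin n))
    (hte₁ : ∀ x, te₁ x = Real.exp (-v x) • fderiv ℝ f x (d 0))
    (hte₂ : ∀ x, te₂ x = Real.exp (-v x) • fderiv ℝ f x (d 1)) :
    ∀ x ∈ Ω,
      (∑ i : Fin 2,
          wedgeSumNormSq (fderiv ℝ te₁ x (d i)) (te₂ x) (te₁ x) (fderiv ℝ te₂ x (d i)))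
        = Real.exp (-(2 * v x)) * ∑ i : Fin 2, ∑ j : Fin 2, ‖A i j x‖ ^ 2 := by
  intro x hx
  have hdv : Differentiable ℝ v := hv.differentiable (by simp)
  -- smoothness of the partial derivatives of f
  have hgC : ∀ j : Fin 2, ContDiff ℝ (⊤ : ℕ∞) (fun y => fderiv ℝ f y (d j)) :=
    fun j => (hf.fderiv_right (by simp)).clm_apply contDiff_const
  have hgD : ∀ (j : Fin 2) (y : ℝ × ℝ),
      DifferentiableAt ℝ (fun y => fderiv ℝ f y (d j)) y :=
    fun j y => ((hgC j).differentiable (by simp)).differentiableAt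
  set s : ℝ := Real.exp (-v x) with hs_def
  have hs : s ≠ 0 := Real.exp_ne_zero _
  set p : Fin 2 → ℝ := fun i => fderiv ℝ v x (d i) with hp
  set B : Fin 2 → Fin 2 → EuclideanSpace ℝ (Fin n) :=
    fun i j => fderiv ℝ (fun y => fderiv ℝ f y (d j)) x (d i) with hB
  set u := fderiv ℝ f x (d 0) with hu
  set w := fderiv ℝ f x (d 1) with hw
  -- basic exponential identities
  have hss : Real.exp (-(2 * v x)) = s * s := by
    rw [hs_def, ← Real.exp_add]; ring_nf
  have hssinv : Real.exp (2 * v x) = (s * s)⁻¹ := by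
    rw [← hss, ← Real.exp_neg]; ring_nf
  -- derivative of e^{-v}
  have hexp : HasFDerivAt (fun y => Real.exp (-v y))
      (Real.exp (-v x) • (-(fderiv ℝ v x))) x :=
    HasFDerivAt.exp ((hdv x).hasFDerivAt.neg)
  -- derivative of te₁ and te₂
  have hte : ∀ (j : Fin 2) (g : ℝ × ℝ → EuclideanSpace ℝ (Fin n)),
      (∀ y, g y = Real.exp (-v y) • fderiv ℝ f y (d j)) →
      ∀ i : Fin 2, fderiv ℝ g x (d i) = (s * (-p i)) • (fderiv ℝ f x (d j)) + s • B i j := by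
    intro j g hg i
    have h1 : HasFDerivAt (fun y => Real.exp (-v y) • fderiv ℝ f y (d j))
        (Real.exp (-v x) • (fderiv ℝ (fun y => fderiv ℝ f y (d j)) x)
          + (Real.exp (-v x) • (-(fderiv ℝ v x))).smulRight (fderiv ℝ f x (d j))) x :=
      hexp.smul (hgD j x).hasFDerivAt
    have hgg : g = fun y => Real.exp (-v y) • fderiv ℝ f y (d j) := funext hg
    rw [hgg, h1.fderiv]
    simp only [ContinuousLinearMap.add_apply, ContinuousLinearMap.smul_apply,
      ContinuousLinearMap.smulRight_apply, ContinuousLinearMap.neg_apply,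
      smul_eq_mul, hB, hp]
    module
  -- differentiating the conformality relations
  have hconf_deriv : ∀ i j : Fin 2, ⟪B i j, fderiv ℝ f x (d j)⟫ = p i * (s * s)⁻¹ := by
    intro i j
    have heq : (fun y => ⟪fderiv ℝ f y (d j), fderiv ℝ f y (d j)⟫)
        =ᶠ[nhds x] (fun y => Real.exp (2 * v y)) := by
      filter_upwards [hΩ.mem_nhds hx] with y hy
      simpa using hconf y hy j j
    have hder : fderiv ℝ (fun y => ⟪fderiv ℝ f y (d j), fderiv ℝ f y (d j)⟫) x (d i)
        = fderiv ℝ (fun y => Real.exp (2 * v y)) x (d i) := by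
      rw [heq.fderiv_eq]
    have hL : fderiv ℝ (fun y => ⟪fderiv ℝ f y (d j), fderiv ℝ f y (d j)⟫) x (d i)
        = ⟪fderiv ℝ f x (d j), B i j⟫ + ⟪B i j, fderiv ℝ f x (d j)⟫ := by
      rw [fderiv_inner_apply ℝ (hgD j x) (hgD j x)]
    have hR : fderiv ℝ (fun y => Real.exp (2 * v y)) x (d i)
        = Real.exp (2 * v x) * (2 * p i) := by
      have h2v : HasFDerivAt (fun y => 2 * v y) ((2:ℝ) • fderiv ℝ v x) x :=
        (hdv x).hasFDerivAt.const_mul 2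
      have := (HasFDerivAt.exp h2v).fderiv
      rw [this]
      simp [smul_eq_mul, hp, mul_assoc]
    rw [hder, hR] at hL
    have hcomm : ⟪fderiv ℝ f x (d j), B i j⟫ = ⟪B i j, fderiv ℝ f x (d j)⟫ :=
      real_inner_comm _ _
    rw [hcomm] at hL
    rw [hssinv] at hL
    nlinarith [hL]
  -- inner products from conformality at x
  have huu : ⟪u, u⟫ = (s * s)⁻¹ := by
    have := hconf x hx 0 0; simpa [hssinv] using this
  have hww : ⟪w, w⟫ = (s * s)⁻¹ := by
    have := hconf x hx 1 1; simpa [hssinv] using this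
  have huw : ⟪u, w⟫ = 0 := by
    have := hconf x hx 0 1; simpa using this
  -- the derivatives of te₁, te₂
  have hD1 : ∀ i : Fin 2, fderiv ℝ te₁ x (d i) = (s * (-p i)) • u + s • B i 0 :=
    fun i => hte 0 te₁ hte₁ i
  have hD2 : ∀ i : Fin 2, fderiv ℝ te₂ x (d i) = (s * (-p i)) • w + s • B i 1 :=
    fun i => hte 1 te₂ hte₂ i
  -- rewrite everything
  have hAij : ∀ i j : Fin 2, A i j x
      = B i j - ((s * s) * ⟪B i j, u⟫) • u - ((s * s) * ⟪B i j, w⟫) • w := by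
    intro i j
    rw [hA i j x, hss]
  calc (∑ i : Fin 2,
          wedgeSumNormSq (fderiv ℝ te₁ x (d i)) (te₂ x) (te₁ x) (fderiv ℝ te₂ x (d i)))
      = ∑ i : Fin 2, (s*s) * (‖A i 0 x‖^2 + ‖A i 1 x‖^2) := by
        refine Finset.sum_congr rfl fun i _ => ?_
        rw [hD1 i, hD2 i, hte₁ x, hte₂ x, hAij i 0, hAij i 1, ← hs_def, ← hu, ← hw]
        exact key_alg u w (B i 0) (B i 1) s (p i) hs huu hww huw
          (hconf_deriv i 0) (hconf_deriv i 1)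
    _ = Real.exp (-(2 * v x)) * ∑ i : Fin 2, ∑ j : Fin 2, ‖A i j x‖ ^ 2 := by
        rw [hss]
        simp [Fin.sum_univ_two, Finset.mul_sum]
        ring
end
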